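/- Theorem (stationary route delay): let r ∈ R be a route with a_j > 0 for every j ∈ r, and let E[Q_j] := ∑_m T(m)_j · μ(m) denote the expected stationary length of queue j. Then the expected end-to-end delay of route r, given by Little's law as E[D_r] := ∑_{j ∈ r} E[Q_j] / a_j, satisfies E[D_r] = ∑_{j ∈ r} ∑_{l ∈ L} A_{lj} / (1 − a_l). -/

import Mathlib

/-!
Under `p_l`, the total `|k|` is geometric with parameter `a_l` and, given `|k| = n`, the vector
`k` is multinomial with cell probabilities `A_{lj} a_j / a_l`; hence
`E[k_j] = A_{lj} a_j / (1 - a_l)`.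
Since `μ` is a product of probability measures, `E[T(m)_j] = ∑_l E[m_{lj}]`, and dividing by
`a_j` gives the route delay. All series are summed in `ℝ≥0∞`, where rearrangements are free;
the terms are finite, so `ENNReal.tsum_toReal_eq` brings the result back to `ℝ`.
-/

open scoped BigOperators Classical

/-- The probability mass function `p_l` of the context (extended by zero off its support):
`p_l(k) = (1 - a_l) * (|k|)! / ∏_j (k j)! * ∏_j (A l j * a_j)^(k j)` where `|k| = ∑ j, k j`. -/
noncomputable def pl {J : Type*} [Fintype J] (Al : J → ℝ) (aJ : J → ℝ) (al : ℝ)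
    (k : J → ℕ) : ℝ :=
  (1 - al) * (((∑ j, k j).factorial : ℝ) / ∏ j, ((k j).factorial : ℝ)) *
    ∏ j, (Al j * aJ j) ^ k j

open Finset
open scoped ENNReal

namespace ENNReal

theorem tsum_eq_tsum_sum_of_mem_iff {α γ : Type*} (g : α → γ) (s : γ → Finset α)
    (hs : ∀ c a, a ∈ s c ↔ g a = c) (f : α → ℝ≥0∞) :
    ∑' a, f a = ∑' c, ∑ a ∈ s c, f a := by
  rw [← ENNReal.tsum_fiberwise f g]
  refine tsum_congr fun c => ?_
  rw [← Finset.tsum_subtype]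
  exact (Equiv.subtypeEquivRight fun a => (hs c a).symm).tsum_eq (fun a => f a)

theorem tsum_add_one_mul_pow (σ : ℝ≥0∞) :
    ∑' n : ℕ, ((n : ℝ≥0∞) + 1) * σ ^ n = (1 - σ)⁻¹ ^ 2 := by
  calc ∑' n : ℕ, ((n : ℝ≥0∞) + 1) * σ ^ n
      = ∑' n : ℕ, ∑ p ∈ antidiagonal n, σ ^ p.1 * σ ^ p.2 := by
        refine tsum_congr fun n => ?_
        rw [sum_congr rfl fun p hp => by rw [← pow_add, mem_antidiagonal.1 hp], sum_const,
          Nat.card_antidiagonal, nsmul_eq_mul, Nat.cast_add_one]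
    _ = ∑' p : ℕ × ℕ, σ ^ p.1 * σ ^ p.2 :=
        (tsum_eq_tsum_sum_of_mem_iff _ antidiagonal (fun _ _ => mem_antidiagonal) _).symm
    _ = (1 - σ)⁻¹ ^ 2 := by
        rw [ENNReal.tsum_prod (f := fun a b => σ ^ a * σ ^ b), sq, ← ENNReal.tsum_geometric,
          ← ENNReal.tsum_mul_right]
        simp_rw [ENNReal.tsum_mul_left]

theorem tsum_pi_prod_eq_prod_tsum {ι β : Type*} [Fintype ι] (f : ι → β → ℝ≥0∞) :
    ∑' m : ι → β, ∏ i, f i (m i) = ∏ i, ∑' b, f i b := by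
  refine Fintype.induction_empty_option
    (P := fun ι _ => ∀ f : ι → β → ℝ≥0∞, ∑' m : ι → β, ∏ i, f i (m i) = ∏ i, ∑' b, f i b)
    ?_ ?_ ?_ ι f
  · intro ι ι' _ e ih f
    let := Fintype.ofEquiv ι' e.symm
    rw [← (e.arrowCongr (Equiv.refl β)).tsum_eq, ← e.prod_comp]
    simpa [← e.prod_comp] using ih (fun i => f (e i))
  · intro f
    simp
  · intro ι _ ih f
    rw [← Equiv.piOptionEquivProd.symm.tsum_eq, Fintype.prod_option, ← ih,
      ← ENNReal.tsum_mul_right]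
    simp_rw [← ENNReal.tsum_mul_left]
    rw [ENNReal.tsum_prod']
    simp [Fintype.prod_option, Equiv.piOptionEquivProd]

theorem tsum_sum_mul_prod_eq_sum_tsum {ι β : Type*} [Fintype ι] (f : ι → β → ℝ≥0∞)
    (hf : ∀ i, ∑' b, f i b = 1) (X : ι → β → ℝ≥0∞) :
    ∑' m : ι → β, (∑ i, X i (m i)) * ∏ i, f i (m i) = ∑ i, ∑' b, X i b * f i b := by
  simp_rw [sum_mul]
  rw [Summable.tsum_finsetSum fun _ _ => ENNReal.summable]
  refine sum_congr rfl fun i _ => ?_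
  have hsplit : ∀ m : ι → β, X i (m i) * ∏ i', f i' (m i') =
      ∏ i', (if i' = i then X i' (m i') else 1) * f i' (m i') := fun m => by
    rw [prod_mul_distrib, Fintype.prod_ite_eq']
  rw [tsum_congr hsplit,
    tsum_pi_prod_eq_prod_tsum (fun i' b => (if i' = i then X i' b else 1) * f i' b),
    Fintype.prod_eq_single i fun i' hi' => by simp [hi', hf]]
  simp

theorem one_sub_sum_ofReal {ι : Type*} {s : Finset ι} {y : ι → ℝ} (hy : ∀ i ∈ s, 0 ≤ y i) :
    1 - ∑ i ∈ s, ENNReal.ofReal (y i) = ENNReal.ofReal (1 - ∑ i ∈ s, y i) := by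
  rw [← ENNReal.ofReal_sum_of_nonneg hy, ENNReal.ofReal_sub _ (sum_nonneg hy), ENNReal.ofReal_one]

end ENNReal

theorem Nat.cast_multinomial {α K : Type*} [Field K] [CharZero K] (s : Finset α) (f : α → ℕ) :
    (Nat.multinomial s f : K) = (∑ i ∈ s, f i).factorial / ∏ i ∈ s, ((f i).factorial : K) := by
  rw [eq_div_iff (prod_ne_zero_iff.2 fun i _ => Nat.cast_ne_zero.2 (f i).factorial_ne_zero),
    ← Nat.multinomial_spec s f]
  push_cast
  ring

theorem Nat.succ_mul_multinomial_add_single {J : Type*} [Fintype J] [DecidableEq J]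
    (k : J → ℕ) (j : J) :
    (k j + 1) * Nat.multinomial univ (k + Pi.single j 1) =
      (∑ i, k i + 1) * Nat.multinomial univ k := by
  have hsum : ∑ i, (k + Pi.single j 1 : J → ℕ) i = ∑ i, k i + 1 := by
    simp [sum_add_distrib]
  have hprod :
      ∏ i, ((k + Pi.single j 1 : J → ℕ) i).factorial = (k j + 1) * ∏ i, (k i).factorial := by
    have hoff : ∀ i ∈ univ.erase j, ((k + Pi.single j 1 : J → ℕ) i).factorial = (k i).factorial :=
      fun i hi => by simp [ne_of_mem_erase hi]
    rw [← mul_prod_erase univ _ (mem_univ j), ← mul_prod_erase univ (fun i => (k i).factorial)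
      (mem_univ j), prod_congr rfl hoff]
    simp [Nat.factorial_succ, mul_assoc]
  apply Nat.eq_of_mul_eq_mul_left (prod_pos fun i _ => (k i).factorial_pos)
  calc (∏ i, (k i).factorial) * ((k j + 1) * Nat.multinomial univ (k + Pi.single j 1))
      = (∏ i, ((k + Pi.single j 1 : J → ℕ) i).factorial) *
          Nat.multinomial univ (k + Pi.single j 1) := by
        rw [hprod]; ring
    _ = (∑ i, k i + 1) * (∑ i, k i).factorial := by
        rw [Nat.multinomial_spec, hsum, Nat.factorial_succ]
    _ = (∏ i, (k i).factorial) * ((∑ i, k i + 1) * Nat.multinomial univ k) := by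
        rw [← Nat.multinomial_spec]; ring

section geomMultinomial

variable {J : Type*} [Fintype J]

theorem tsum_multinomial_mul_prod_pow (x : J → ℝ≥0∞) :
    ∑' k : J → ℕ, (Nat.multinomial univ k : ℝ≥0∞) * ∏ i, x i ^ k i = (1 - ∑ i, x i)⁻¹ := by
  rw [ENNReal.tsum_eq_tsum_sum_of_mem_iff (fun k => ∑ i, k i) (piAntidiag univ) (by simp),
    ← ENNReal.tsum_geometric]
  simp_rw [← sum_pow_eq_sum_piAntidiag]

theorem tsum_mul_multinomial_mul_prod_pow (x : J → ℝ≥0∞) (j : J) :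
    ∑' k : J → ℕ, (k j : ℝ≥0∞) * ((Nat.multinomial univ k : ℝ≥0∞) * ∏ i, x i ^ k i) =
      x j * (1 - ∑ i, x i)⁻¹ ^ 2 := by
  set W : (J → ℕ) → ℝ≥0∞ := fun k => (Nat.multinomial univ k : ℝ≥0∞) * ∏ i, x i ^ k i
  have hshift : ∀ k : J → ℕ, ((k + Pi.single j 1 : J → ℕ) j : ℝ≥0∞) * W (k + Pi.single j 1) =
      x j * (((∑ i, k i : ℕ) + 1) * W k) := by
    intro k
    have hpow : ∏ i, x i ^ (k + Pi.single j 1 : J → ℕ) i = x j * ∏ i, x i ^ k i := by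
      simp only [Pi.add_apply, pow_add, prod_mul_distrib, Pi.single_apply, pow_ite, pow_one,
        pow_zero, Fintype.prod_ite_eq', mul_comm]
    have hM := congrArg (Nat.cast : ℕ → ℝ≥0∞) (Nat.succ_mul_multinomial_add_single k j)
    simp only [Nat.cast_mul, Nat.cast_add, Nat.cast_one] at hM
    simp only [W]
    rw [hpow, Pi.add_apply, Pi.single_eq_same, Nat.cast_add, Nat.cast_one]
    calc ((k j : ℝ≥0∞) + 1) * (Nat.multinomial univ (k + Pi.single j 1) * (x j * ∏ i, x i ^ k i))
        = ((k j + 1) * Nat.multinomial univ (k + Pi.single j 1)) * (x j * ∏ i, x i ^ k i) := by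
          ring
      _ = x j * ((∑ i, k i + 1) * (Nat.multinomial univ k * ∏ i, x i ^ k i)) := by
          rw [hM]; ring
  -- Only `k` with `k j ≠ 0` contribute, so we may substitute `k + Pi.single j 1` for `k`.
  have hsupp : Function.support (fun k : J → ℕ => (k j : ℝ≥0∞) * W k) ⊆
      Set.range (· + Pi.single j 1 : (J → ℕ) → J → ℕ) := by
    intro k hk
    have hkj : k j ≠ 0 := by
      rintro h
      simp [h] at hk
    refine ⟨k - Pi.single j 1, funext fun i => ?_⟩
    by_cases hi : i = j
    · subst hi
      simp only [Pi.add_apply, Pi.sub_apply, Pi.single_eq_same]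
      omega
    · simp [hi]
  rw [← (add_left_injective (Pi.single j 1)).tsum_eq hsupp, tsum_congr hshift,
    ENNReal.tsum_mul_left,
    ENNReal.tsum_eq_tsum_sum_of_mem_iff (fun k => ∑ i, k i) (piAntidiag univ) (by simp),
    ← ENNReal.tsum_add_one_mul_pow]
  refine congrArg _ (tsum_congr fun n => ?_)
  rw [sum_pow_eq_sum_piAntidiag, mul_sum]
  refine sum_congr rfl fun k hk => ?_
  rw [(mem_piAntidiag.1 hk).1]

/-- The law of `k` when `|k|` is geometric with ratio `∑ i, x i` and each of the `|k|` items
falls in class `i` with probability `x i / ∑ i, x i`; `p_l` is its real part for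
`x j = A_{lj} a_j`. -/
noncomputable def geomMultinomial (x : J → ℝ≥0∞) (k : J → ℕ) : ℝ≥0∞ :=
  (1 - ∑ i, x i) * ((Nat.multinomial univ k : ℝ≥0∞) * ∏ i, x i ^ k i)

theorem geomMultinomial_ne_top {x : J → ℝ≥0∞} (hx : ∀ i, x i ≠ ⊤) (k : J → ℕ) :
    geomMultinomial x k ≠ ⊤ :=
  ENNReal.mul_ne_top (ENNReal.sub_ne_top ENNReal.one_ne_top) <|
    ENNReal.mul_ne_top (ENNReal.natCast_ne_top _) <| ENNReal.prod_ne_top fun i _ =>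
      ENNReal.pow_ne_top (hx i)

theorem tsum_geomMultinomial {x : J → ℝ≥0∞} (hx : ∑ i, x i < 1) :
    ∑' k, geomMultinomial x k = 1 := by
  simp only [geomMultinomial]
  rw [ENNReal.tsum_mul_left, tsum_multinomial_mul_prod_pow,
    ENNReal.mul_inv_cancel (tsub_pos_of_lt hx).ne' (ENNReal.sub_ne_top ENNReal.one_ne_top)]

theorem tsum_mul_geomMultinomial {x : J → ℝ≥0∞} (hx : ∑ i, x i < 1) (j : J) :
    ∑' k : J → ℕ, (k j : ℝ≥0∞) * geomMultinomial x k = x j / (1 - ∑ i, x i) := by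
  simp_rw [geomMultinomial, mul_left_comm (_ : ℝ≥0∞) (1 - ∑ i, x i)]
  rw [ENNReal.tsum_mul_left, tsum_mul_multinomial_mul_prod_pow, sq, div_eq_mul_inv,
    mul_left_comm, ← mul_assoc (1 - ∑ i, x i),
    ENNReal.mul_inv_cancel (tsub_pos_of_lt hx).ne' (ENNReal.sub_ne_top ENNReal.one_ne_top), one_mul]

end geomMultinomial

theorem pl_eq_toReal_geomMultinomial {J : Type*} [Fintype J] {Al aJ : J → ℝ}
    (hnn : ∀ j, 0 ≤ Al j * aJ j) (hle : ∑ j, Al j * aJ j ≤ 1) (k : J → ℕ) :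
    pl Al aJ (∑ j, Al j * aJ j) k =
      (geomMultinomial (fun j => ENNReal.ofReal (Al j * aJ j)) k).toReal := by
  rw [pl, geomMultinomial, ENNReal.one_sub_sum_ofReal fun j _ => hnn j, ← Nat.cast_multinomial]
  simp [ENNReal.toReal_prod, ENNReal.toReal_ofReal (sub_nonneg.2 hle),
    ENNReal.toReal_ofReal (hnn _), mul_assoc]

theorem tsum_sum_mul_prod_pl {J L : Type*} [Fintype J] [Fintype L] (A : L → J → ℝ)
    (hA : ∀ l j, 0 ≤ A l j) (aJ : J → ℝ) (haJ : ∀ j, 0 ≤ aJ j) (aL : L → ℝ)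
    (haL : ∀ l, aL l = ∑ j, A l j * aJ j) (hsub : ∀ l, aL l < 1) (j : J) :
    ∑' m : L → J → ℕ, ((∑ l, m l j : ℕ) : ℝ) * ∏ l, pl (A l) aJ (aL l) (m l) =
      ∑ l, A l j * aJ j / (1 - aL l) := by
  have hnn : ∀ l i, 0 ≤ A l i * aJ i := fun l i => mul_nonneg (hA l i) (haJ i)
  set x : L → J → ℝ≥0∞ := fun l i => ENNReal.ofReal (A l i * aJ i)
  have hpl : ∀ l k, pl (A l) aJ (aL l) k = (geomMultinomial (x l) k).toReal := fun l k => by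
    rw [haL l]
    exact pl_eq_toReal_geomMultinomial (hnn l) (haL l ▸ (hsub l).le) k
  have hx : ∀ l, ∑ i, x l i < 1 := fun l => by
    rw [← ENNReal.ofReal_sum_of_nonneg fun i _ => hnn l i, ← haL l]
    exact ENNReal.ofReal_lt_one.2 (hsub l)
  have hmean : ∀ l, x l j / (1 - ∑ i, x l i) = ENNReal.ofReal (A l j * aJ j / (1 - aL l)) := by
    intro l
    rw [ENNReal.one_sub_sum_ofReal fun i _ => hnn l i, ← haL l,
      ENNReal.ofReal_div_of_pos (sub_pos.2 (hsub l))]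
  calc ∑' m : L → J → ℕ, ((∑ l, m l j : ℕ) : ℝ) * ∏ l, pl (A l) aJ (aL l) (m l)
      = ∑' m : L → J → ℕ,
          (((∑ l, m l j : ℕ) : ℝ≥0∞) * ∏ l, geomMultinomial (x l) (m l)).toReal := by
        simp only [hpl, ENNReal.toReal_mul, ENNReal.toReal_prod, ENNReal.toReal_natCast]
    _ = (∑' m : L → J → ℕ,
          ((∑ l, m l j : ℕ) : ℝ≥0∞) * ∏ l, geomMultinomial (x l) (m l)).toReal :=
        (ENNReal.tsum_toReal_eq fun m => ENNReal.mul_ne_top (ENNReal.natCast_ne_top _) <|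
          ENNReal.prod_ne_top fun l _ =>
            geomMultinomial_ne_top (fun _ => ENNReal.ofReal_ne_top) _).symm
    _ = (∑ l, ENNReal.ofReal (A l j * aJ j / (1 - aL l))).toReal := by
        push_cast
        rw [ENNReal.tsum_sum_mul_prod_eq_sum_tsum _ (fun l => tsum_geomMultinomial (hx l))
          (fun _ k => (k j : ℝ≥0∞))]
        simp_rw [tsum_mul_geomMultinomial (hx _), hmean]
    _ = ∑ l, A l j * aJ j / (1 - aL l) := by
        have hterm : ∀ l ∈ univ, 0 ≤ A l j * aJ j / (1 - aL l) :=
          fun l _ => div_nonneg (hnn l j) (sub_pos.2 (hsub l)).le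
        rw [← ENNReal.ofReal_sum_of_nonneg hterm, ENNReal.toReal_ofReal (sum_nonneg hterm)]

theorem stationary_route_delay_general
    {J L R : Type*} [Fintype J] [DecidableEq J]
    [Fintype L] [Fintype R]
    (A : L → J → ℝ) (hA : ∀ l j, 0 ≤ A l j)
    (route : R → List J)
    (a : R → ℝ) (ha : ∀ r, 0 < a r)
    (aJ : J → ℝ) (haJ : ∀ j, aJ j = ∑ r : R, if j ∈ route r then a r else 0)
    (aL : L → ℝ) (haL : ∀ l, aL l = ∑ j, A l j * aJ j)
    (hsub : ∀ l, aL l < 1)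
    (r : R) (hpos : ∀ j ∈ route r, 0 < aJ j) :
    ∑ j ∈ (route r).toFinset,
        (∑' m : L → J → ℕ, ((∑ l, m l j : ℕ) : ℝ) * ∏ l, pl (A l) aJ (aL l) (m l)) / aJ j
      = ∑ j ∈ (route r).toFinset, ∑ l, A l j / (1 - aL l) := by
  have haJ0 : ∀ j, 0 ≤ aJ j := fun j => by
    rw [haJ j]
    exact sum_nonneg fun r _ => by split_ifs <;> simp [(ha r).le]
  refine sum_congr rfl fun j hj => ?_
  have hj : 0 < aJ j := hpos j (List.mem_toFinset.1 hj)
  rw [tsum_sum_mul_prod_pl A hA aJ haJ0 aL haL hsub j, sum_div]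
  refine sum_congr rfl fun l _ => ?_
  field_simp

/-- stationary route delay: let `r` be a route with `a_j > 0` for every
`j ∈ r`, and let `E[Q_j] = ∑_m T(m) j * μ(m)` be the expected stationary length of queue
`j` under the product measure `μ(m) = ∏ l, p_l (m l)`, `T(m) j = ∑ l, m l j`.  Then the
expected end-to-end delay of route `r`, given by Little's law as
`E[D_r] = ∑_{j ∈ r} E[Q_j] / a_j`, satisfies
`E[D_r] = ∑_{j ∈ r} ∑_l A l j / (1 - a_l)`. -/
theorem stationary_route_delay
    {J L R : Type*} [Fintype J] [Nonempty J] [DecidableEq J]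
    [Fintype L] [Nonempty L] [Fintype R]
    (A : L → J → ℝ) (hA : ∀ l j, 0 ≤ A l j)
    (route : R → List J) (hnodup : ∀ r, (route r).Nodup)
    (a : R → ℝ) (ha : ∀ r, 0 < a r)
    (aJ : J → ℝ) (haJ : ∀ j, aJ j = ∑ r : R, if j ∈ route r then a r else 0)
    (aL : L → ℝ) (haL : ∀ l, aL l = ∑ j, A l j * aJ j)
    (hsub : ∀ l, aL l < 1)
    (r : R) (hpos : ∀ j ∈ route r, 0 < aJ j) :
    ∑ j ∈ (route r).toFinset,
        (∑' m : L → J → ℕ, ((∑ l, m l j : ℕ) : ℝ) * ∏ l, pl (A l) aJ (aL l) (m l)) / aJ j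
      = ∑ j ∈ (route r).toFinset, ∑ l, A l j / (1 - aL l) :=
  stationary_route_delay_general A hA route a ha aJ haJ aL haL hsub r hpos
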